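/- For any M-monadic proper expression E over Σ, any symbol a ∈ Σ, and any word w ∈ Σ*, the weight of aw in E equals the bind of the derivative of E by a with the weight function: weight_{aw}(E) = d_a(E) >>= weight_w. -/

import Mathlib

/-!
Apply `weight_toExp` to `d_a(E)`: the right-hand side is the weight of `w` in `toExp(d_a(E))`,
so it suffices that `toExp(d_a(E))` denotes the left quotient `w ↦ S(E)(a w)`. This follows by
structural induction on `E` from the compatibility laws of `toExp`. The only combinatorial input
is the left quotient of a product and of a star: a factorization of `a w` either starts with an
empty factor (`cauchy`) or has a first factor `a u` with `u` a prefix of `w` (`starSeries`, whose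
factors are nonempty, so the first one always contains `a`).
-/

/-- `M`-monadic expressions over an alphabet `A`, where `K = M(𝟙)`. -/
inductive MExp (A K : Type) : Type
  | sym : A → MExp A K
  | eps : MExp A K
  | empty : MExp A K
  | plus : MExp A K → MExp A K → MExp A K
  | times : MExp A K → MExp A K → MExp A K
  | star : MExp A K → MExp A K
  | lact : K → MExp A K → MExp A K
  | ract : MExp A K → K → MExp A K
  | fn : (n : ℕ) → ((Fin n → K) → K) → (Fin n → MExp A K) → MExp A K

variable {A K : Type}

/-- The nullability value (for star, `1`, valid on proper expressions). -/
def MExp.null [Semiring K] : MExp A K → K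
  | .sym _ => 0
  | .eps => 1
  | .empty => 0
  | .plus e₁ e₂ => e₁.null + e₂.null
  | .times e₁ e₂ => e₁.null * e₂.null
  | .star _ => 1
  | .lact k e => k * e.null
  | .ract e k => e.null * k
  | .fn _ f es => f (fun i => (es i).null)

/-- Properness: every starred subexpression has a null nullability value. -/
def MExp.IsProper [Semiring K] : MExp A K → Prop
  | .sym _ | .eps | .empty => True
  | .plus e₁ e₂ | .times e₁ e₂ => e₁.IsProper ∧ e₂.IsProper
  | .star e => e.IsProper ∧ e.null = 0
  | .lact _ e | .ract e _ => e.IsProper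
  | .fn _ _ es => ∀ i, (es i).IsProper

/-- Cauchy product of series. -/
def cauchy [Semiring K] (S₁ S₂ : List A → K) : List A → K :=
  fun w => ∑ i ∈ Finset.range (w.length + 1), S₁ (w.take i) * S₂ (w.drop i)

/-- Star of a series: sum over factorizations into nonempty factors. -/
def starSeries [Semiring K] (S : List A → K) : List A → K
  | [] => 1
  | w => ∑ c : Composition w.length, ((w.splitWrtComposition c).map S).prod

/-- The series associated with an expression. -/
def MExp.series [Semiring K] [DecidableEq A] : MExp A K → List A → K
  | .sym a, w => if w = [a] then 1 else 0
  | .eps, w => if w = [] then 1 else 0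
  | .empty, _ => 0
  | .plus e₁ e₂, w => e₁.series w + e₂.series w
  | .times e₁ e₂, w => cauchy e₁.series e₂.series w
  | .star e, w => starSeries e.series w
  | .lact k e, w => k * e.series w
  | .ract e k, w => e.series w * k
  | .fn _ f es, w => f (fun i => (es i).series w)

/-- The weight associated with a word `w` by an expression `E`: `weight_w(E) = S(E)(w)`. -/
def MExp.weight [Semiring K] [DecidableEq A] (w : List A) (E : MExp A K) : K := E.series w

/-- An expressive support for a monad `M`: a monoid `(M(Exp(Σ)), ±, 0̲)`, a right action
`⋉` of expressions, left and right actions `▷`, `◁` of `M(𝟙)`, an operad-module action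
`⋇` of functions over `M(𝟙)`, and a function `toExp` compatible with all operations
(where two expressions denoting the same series are identified). -/
structure ExpressiveSupport (M : Type → Type) (A : Type) [Monad M]
    [Semiring (M PUnit)] [DecidableEq A] where
  pm : M (MExp A (M PUnit)) → M (MExp A (M PUnit)) → M (MExp A (M PUnit))
  zero : M (MExp A (M PUnit))
  ltimes : M (MExp A (M PUnit)) → MExp A (M PUnit) → M (MExp A (M PUnit))
  lactM : M PUnit → M (MExp A (M PUnit)) → M (MExp A (M PUnit))
  ractM : M (MExp A (M PUnit)) → M PUnit → M (MExp A (M PUnit))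
  fapp : (n : ℕ) → ((Fin n → M PUnit) → M PUnit) →
    (Fin n → M (MExp A (M PUnit))) → M (MExp A (M PUnit))
  toExp : M (MExp A (M PUnit)) → MExp A (M PUnit)
  /-- monoid laws for `±` with unit `0̲` -/
  pm_assoc : ∀ m₁ m₂ m₃, pm (pm m₁ m₂) m₃ = pm m₁ (pm m₂ m₃)
  pm_zero : ∀ m, pm m zero = m
  zero_pm : ∀ m, pm zero m = m
  /-- `weight_w(toExp(m)) = m >>= weight_w` -/
  weight_toExp : ∀ (w : List A) m, (toExp m).weight w = m >>= MExp.weight w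
  /-- `toExp(m ⋉ F) = toExp(m) · F` -/
  toExp_ltimes : ∀ m F w, (toExp (ltimes m F)).series w = ((toExp m).times F).series w
  /-- `toExp(m ± m') = toExp(m) + toExp(m')` -/
  toExp_pm : ∀ m m' w, (toExp (pm m m')).series w = ((toExp m).plus (toExp m')).series w
  /-- `toExp(α ▷ m) = α ⊙ toExp(m)` -/
  toExp_lact : ∀ α m w, (toExp (lactM α m)).series w = (MExp.lact α (toExp m)).series w
  /-- `toExp(m ◁ α) = toExp(m) ⊙ α` -/
  toExp_ract : ∀ m α w, (toExp (ractM m α)).series w = (MExp.ract (toExp m) α).series w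
  /-- `toExp(f ⋇ (m₁,…,mₙ)) = f(toExp(m₁),…,toExp(mₙ))` -/
  toExp_fapp : ∀ n f ms w,
    (toExp (fapp n f ms)).series w = (MExp.fn n f (fun i => toExp (ms i))).series w

variable {M : Type → Type} [Monad M] [Semiring (M PUnit)] [DecidableEq A]

/-- The monadic derivative of an expression w.r.t. a symbol. -/
def mderiv (sup : ExpressiveSupport M A) (a : A) :
    MExp A (M PUnit) → M (MExp A (M PUnit))
  | .sym b => if a = b then pure MExp.eps else sup.zero
  | .eps => sup.zero
  | .empty => sup.zero
  | .plus e₁ e₂ => sup.pm (mderiv sup a e₁) (mderiv sup a e₂)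
  | .times e₁ e₂ =>
      sup.pm (sup.ltimes (mderiv sup a e₁) e₂) (sup.lactM e₁.null (mderiv sup a e₂))
  | .star e => sup.ltimes (mderiv sup a e) (MExp.star e)
  | .lact α e => sup.lactM α (mderiv sup a e)
  | .ract e α => sup.ractM (mderiv sup a e) α
  | .fn n f es => sup.fapp n f (fun i => mderiv sup a (es i))

namespace Composition

/-- The first block of `c` is `i + 1`, the remaining blocks form a composition of `n - i`. -/
def consEquiv (n : ℕ) : Composition (n + 1) ≃ Σ i : Fin (n + 1), Composition (n - i) where
  toFun c :=
    have hne : c.blocks ≠ [] := c.blocks_eq_nil.not.2 n.succ_ne_zero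
    have hsum : c.blocks.head hne + c.blocks.tail.sum = n + 1 := by
      rw [← List.sum_cons, List.cons_head_tail, c.blocks_sum]
    have hpos : 0 < c.blocks.head hne := c.blocks_pos (List.head_mem hne)
    ⟨⟨c.blocks.head hne - 1, by omega⟩,
      ⟨c.blocks.tail, fun hi => c.blocks_pos (List.mem_of_mem_tail hi), by simp; omega⟩⟩
  invFun p :=
    ⟨(p.1 + 1) :: p.2.blocks,
      fun hi => List.forall_mem_cons.2 ⟨Nat.succ_pos _, fun _ => p.2.blocks_pos⟩ _ hi,
      by have := p.2.blocks_sum; have := p.1.isLt; simp; omega⟩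
  left_inv c := by
    have hne : c.blocks ≠ [] := c.blocks_eq_nil.not.2 n.succ_ne_zero
    have hpos : 0 < c.blocks.head hne := c.blocks_pos (List.head_mem hne)
    ext1
    simp only
    rw [Nat.sub_add_cancel hpos, List.cons_head_tail]
  right_inv _ := rfl

@[simp]
theorem consEquiv_symm_blocks {n : ℕ} (p : Σ i : Fin (n + 1), Composition (n - i)) :
    ((consEquiv n).symm p).blocks = ((p.1 : ℕ) + 1) :: p.2.blocks :=
  rfl

end Composition

section Series

variable {α R : Type} [Semiring R]

theorem starSeries_eq_sum (S : List α → R) {u : List α} {m : ℕ} (hm : u.length = m) :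
    starSeries S u = ∑ c : Composition m, ((u.splitWrtComposition c).map S).prod := by
  subst hm
  cases u with
  | cons => rfl
  | nil =>
    have hterm (c : Composition 0) : (([] : List α).splitWrtComposition c).map S = [] := by
      simp [List.splitWrtComposition, c.blocks_eq_nil.2 rfl, List.splitWrtCompositionAux]
    simp [starSeries, hterm, composition_card]

theorem starSeries_cons (S : List α → R) (a : α) (w : List α) :
    starSeries S (a :: w) = cauchy (fun u => S (a :: u)) (starSeries S) w := by
  have hsplit (i : Fin (w.length + 1)) (c : Composition (w.length - i)) :
      (((a :: w).splitWrtComposition ((Composition.consEquiv _).symm ⟨i, c⟩)).map S).prod =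
        S (a :: w.take i) * (((w.drop i).splitWrtComposition c).map S).prod := by
    simp [List.splitWrtComposition, List.splitWrtCompositionAux_cons]
  rw [starSeries_eq_sum S (List.length_cons ..), ← (Composition.consEquiv _).symm.sum_comp,
    Fintype.sum_sigma, cauchy, Finset.sum_range]
  simp only [hsplit, ← Finset.mul_sum, ← starSeries_eq_sum S (List.length_drop ..)]

theorem cauchy_cons (S₁ S₂ : List α → R) (a : α) (w : List α) :
    cauchy S₁ S₂ (a :: w) = S₁ [] * S₂ (a :: w) + cauchy (fun u => S₁ (a :: u)) S₂ w := by
  rw [cauchy, List.length_cons, Finset.sum_range_succ', add_comm]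
  rfl

end Series

theorem MExp.null_eq_series_nil [Semiring K] (E : MExp A K) : E.null = E.series [] := by
  induction E with
  | fn n f es ih => simp only [MExp.null, MExp.series, ih]
  | _ => simp_all [MExp.null, MExp.series, cauchy, starSeries]

namespace ExpressiveSupport

variable [LawfulMonad M] (sup : ExpressiveSupport M A)

theorem series_toExp_pure (E : MExp A (M PUnit)) (w : List A) :
    (sup.toExp (pure E)).series w = E.series w := by
  simpa [MExp.weight] using sup.weight_toExp w (pure E)

theorem series_toExp_zero (w : List A) : (sup.toExp sup.zero).series w = 0 := by
  -- `0̲ ± pure ∅ = pure ∅`, and `toExp (pure ∅)` denotes the zero series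
  have h := sup.toExp_pm sup.zero (pure .empty) w
  rw [sup.zero_pm, MExp.series, series_toExp_pure, MExp.series, add_zero] at h
  exact h.symm

theorem series_toExp_mderiv (a : A) (E : MExp A (M PUnit)) (w : List A) :
    (sup.toExp (mderiv sup a E)).series w = E.series (a :: w) := by
  induction E generalizing w with
  | sym b =>
    by_cases hab : a = b
    · simp [mderiv, hab, series_toExp_pure, MExp.series]
    · simp [mderiv, hab, series_toExp_zero, MExp.series]
  | eps | empty => simp [mderiv, series_toExp_zero, MExp.series]
  | plus e₁ e₂ ih₁ ih₂ => simp only [mderiv, toExp_pm, MExp.series, ih₁, ih₂]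
  | times e₁ e₂ ih₁ ih₂ =>
    simp only [mderiv, toExp_pm, toExp_ltimes, toExp_lact, MExp.series, funext ih₁, ih₂,
      cauchy_cons, MExp.null_eq_series_nil, add_comm]
  | star e ih => simp only [mderiv, toExp_ltimes, MExp.series, funext ih, starSeries_cons]
  | lact α e ih => simp only [mderiv, toExp_lact, MExp.series, ih]
  | ract e α ih => simp only [mderiv, toExp_ract, MExp.series, ih]
  | fn n f es ih => simp only [mderiv, toExp_fapp, MExp.series, ih]

end ExpressiveSupport

theorem weight_cons_eq_deriv_bind_general [LawfulMonad M]
    (sup : ExpressiveSupport M A) (E : MExp A (M PUnit))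
    (a : A) (w : List A) :
    E.weight (a :: w) = mderiv sup a E >>= MExp.weight w := by
  rw [← sup.weight_toExp, MExp.weight, MExp.weight, sup.series_toExp_mderiv]

/-- For any proper `M`-monadic expression `E`, symbol `a` and word `w`:
`weight_{aw}(E) = d_a(E) >>= weight_w`. -/
theorem weight_cons_eq_deriv_bind [LawfulMonad M]
    (sup : ExpressiveSupport M A) (E : MExp A (M PUnit)) (hE : E.IsProper)
    (a : A) (w : List A) :
    E.weight (a :: w) = mderiv sup a E >>= MExp.weight w :=
  weight_cons_eq_deriv_bind_general sup E a w
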